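/- arXiv:1708.09632 — 2 statements merged into one kernel-verified Lean document; each statement's English description precedes it below -/
import Mathlib

section
/- Let p : E → B be a Grothendieck fibration of categories, and suppose given a pullback square in B with sides f' : a' → b', α : a' → a, β : b' → b, f : a → b (so f α = β f'). If b̄' → b̄ is a morphism in E over β, ā → b̄ is a p-cartesian morphism over f, and ā' → b̄' is a p-cartesian morphism over f', then the induced commutative square in E (where the morphism ā' → ā is produced by the universal property of the cartesian morphism ā → b̄) is a pullback square in E. -/
open CategoryTheory

universe v₁ u₁ v₂ u₂

variable {E : Type u₁} [Category.{v₁} E] {B : Type u₂} [Category.{v₂} B]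

/-- A morphism `φ : x ⟶ y` of `E` is `p`-cartesian if for every `z` and every morphism
`h : z ⟶ y` whose image factors through `p.map φ` via `g`, there is a unique lift
`k : z ⟶ x` over `g` with `k ≫ φ = h`. -/
def IsCartesianMor (p : E ⥤ B) {x y : E} (φ : x ⟶ y) : Prop :=
  ∀ (z : E) (g : p.obj z ⟶ p.obj x) (h : z ⟶ y), p.map h = g ≫ p.map φ →
    ∃! k : z ⟶ x, p.map k = g ∧ k ≫ φ = h

/-- `p : E ⥤ B` is a Grothendieck fibration: every morphism of `B` with prescribed
target admits a cartesian lift. -/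
def IsGrothendieckFibration (p : E ⥤ B) : Prop :=
  ∀ (y : E) (a : B) (f : a ⟶ p.obj y),
    ∃ (x : E) (φ : x ⟶ y) (h : p.obj x = a),
      IsCartesianMor p φ ∧ p.map φ = eqToHom h ≫ f

/-!
A cone `(u, v)` over `abar → bbar ← bbar'` maps to a cone over the base square, which has a
unique lift `g` through `p(abar')`. Cartesianness of `fbar'` lifts the pair `(g, v)` to
`k : z ⟶ abar'`, and cartesianness of `fbar` shows `k ≫ αbar = u`, since both lie over
`p.map u` and agree after composing with `fbar`. Uniqueness of `k` likewise reduces, via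
`fbar'`, to uniqueness in the base pullback.
-/

theorem IsCartesianMor.hom_ext {p : E ⥤ B} {x y : E} {φ : x ⟶ y} (hφ : IsCartesianMor p φ)
    {z : E} {k k' : z ⟶ x} (hmap : p.map k = p.map k') (hcomp : k ≫ φ = k' ≫ φ) : k = k' :=
  (hφ z (p.map k) (k ≫ φ) (p.map_comp k φ)).unique ⟨rfl, rfl⟩ ⟨hmap.symm, hcomp.symm⟩

theorem cartesian_lift_pullback_square_general (p : E ⥤ B)
    {abar' bbar' abar bbar : E}
    (αbar : abar' ⟶ abar) (fbar' : abar' ⟶ bbar') (fbar : abar ⟶ bbar) (βbar : bbar' ⟶ bbar)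
    (hsq : αbar ≫ fbar = fbar' ≫ βbar)
    (hbase : IsPullback (p.map αbar) (p.map fbar') (p.map fbar) (p.map βbar))
    (hf : IsCartesianMor p fbar) (hf' : IsCartesianMor p fbar') :
    IsPullback αbar fbar' fbar βbar := by
  refine IsPullback.mk' hsq (fun z k k' hfst hsnd => ?_) (fun z u v w => ?_)
  · refine hf'.hom_ext (hbase.hom_ext ?_ ?_) hsnd
    · simp only [← p.map_comp, hfst]
    · simp only [← p.map_comp, hsnd]
  · have wbase : p.map u ≫ p.map fbar = p.map v ≫ p.map βbar := by
      simp only [← p.map_comp, w]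
    obtain ⟨k, hk_map, hk_comp⟩ :=
      (hf' z (hbase.lift _ _ wbase) v (hbase.lift_snd _ _ wbase).symm).exists
    refine ⟨k, hf.hom_ext ?_ ?_, hk_comp⟩
    · rw [p.map_comp, hk_map, hbase.lift_fst]
    · rw [Category.assoc, hsq, reassoc_of% hk_comp, w]

/-- Let `p : E → B` be a Grothendieck fibration. Given a commutative square in `E`
whose image under `p` is a pullback square in `B`, such that the two morphisms lying
over the "backwards" maps are `p`-cartesian, the square is a pullback in `E`. -/
theorem cartesian_lift_pullback_square (p : E ⥤ B) (hp : IsGrothendieckFibration p)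
    {abar' bbar' abar bbar : E}
    (αbar : abar' ⟶ abar) (fbar' : abar' ⟶ bbar') (fbar : abar ⟶ bbar) (βbar : bbar' ⟶ bbar)
    (hsq : αbar ≫ fbar = fbar' ≫ βbar)
    (hbase : IsPullback (p.map αbar) (p.map fbar') (p.map fbar) (p.map βbar))
    (hf : IsCartesianMor p fbar) (hf' : IsCartesianMor p fbar') :
    IsPullback αbar fbar' fbar βbar :=
  cartesian_lift_pullback_square_general p αbar fbar' fbar βbar hsq hbase hf hf'
end

section
/- Let C be a category with pullbacks and let X : Δᵒᵖ → C be a category object (i.e. X satisfies the Segal condition: for every n, the canonical map X_n → X_1 ×_{X_0} ⋯ ×_{X_0} X_1 induced by the inert inclusions is an isomorphism). Then X_1 carries the structure of a monoid in the monoidal category Span(C) of isomorphism classes of spans (with monoidal structure given by the cartesian product of C): the multiplication is the span X_1 × X_1 ← X_2 → X_1 given by (X(d_2), X(d_0)) and X(d_1), the unit is the span * ← X_0 → X_1 given by X(s_0), and these satisfy the associativity and unit axioms for a monoid in Span(C). -/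
open CategoryTheory CategoryTheory.Limits Simplicial

universe v u

variable {C : Type u} [Category.{v} C]

/-- A span from `x` to `y` in `C`: a diagram `x ⟵ mid ⟶ y`. -/
structure SpanD (x y : C) where
  mid : C
  l : mid ⟶ x
  r : mid ⟶ y

/-- Two spans are isomorphic if there is an isomorphism of their middle objects
commuting with the legs. -/
def SpanEquiv {x y : C} (s t : SpanD x y) : Prop :=
  ∃ e : s.mid ≅ t.mid, e.hom ≫ t.l = s.l ∧ e.hom ≫ t.r = s.r

/-- The identity span `x ⟵ x ⟶ x`. -/
def idSpan (x : C) : SpanD x x := ⟨x, 𝟙 x, 𝟙 x⟩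

/-- Composition of spans by pullback. -/
noncomputable def compSpan [HasPullbacks C] {x y z : C} (s : SpanD x y) (t : SpanD y z) :
    SpanD x z :=
  ⟨pullback s.r t.l, pullback.fst s.r t.l ≫ s.l, pullback.snd s.r t.l ≫ t.r⟩

/-- The product of two spans, for the monoidal structure on `Span(C)` induced by the
cartesian product of `C`. -/
noncomputable def prodSpan [HasBinaryProducts C] {x y x' y' : C}
    (s : SpanD x y) (t : SpanD x' y') : SpanD (x ⨯ x') (y ⨯ y') :=
  ⟨s.mid ⨯ t.mid, prod.map s.l t.l, prod.map s.r t.r⟩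

/-- The span associated to an isomorphism. -/
def isoSpan {x y : C} (e : x ≅ y) : SpanD x y := ⟨x, 𝟙 x, e.hom⟩

/-- The axioms for `(X1, m, u)` to be a monoid object in the monoidal category `Span(C)`
of isomorphism classes of spans in `C` under the cartesian product: associativity and the
two unit laws, up to isomorphism of spans. -/
noncomputable def IsMonoidInSpan [HasFiniteLimits C] (X1 : C)
    (m : SpanD (X1 ⨯ X1) X1) (u : SpanD (⊤_ C) X1) : Prop :=
  SpanEquiv (compSpan (prodSpan m (idSpan X1)) m)
      (compSpan (isoSpan (prod.associator X1 X1 X1)) (compSpan (prodSpan (idSpan X1) m) m)) ∧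
  SpanEquiv (compSpan (prodSpan u (idSpan X1)) m) (isoSpan (prod.leftUnitor X1)) ∧
  SpanEquiv (compSpan (prodSpan (idSpan X1) u) m) (isoSpan (prod.rightUnitor X1))

/-- The multiplication span `X_1 ⨯ X_1 ⟵ X_2 ⟶ X_1` of a simplicial object,
with left leg `(X(d_2), X(d_0))` and right leg `X(d_1)`. -/
noncomputable def mulSpan [HasBinaryProducts C] (X : SimplicialObject C) :
    SpanD (X _⦋1⦌ ⨯ X _⦋1⦌) (X _⦋1⦌) :=
  ⟨X _⦋2⦌, prod.lift (X.δ 2) (X.δ 0), X.δ 1⟩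

/-- The unit span `* ⟵ X_0 ⟶ X_1` of a simplicial object, with right leg `X(s_0)`. -/
noncomputable def unitSpan [HasTerminal C] (X : SimplicialObject C) :
    SpanD (⊤_ C) (X _⦋1⦌) :=
  ⟨X _⦋0⦌, terminal.from _, X.σ 0⟩


namespace SegalHelpers

/-- The inert inclusion `⦋n⦌ ↪ [n+1]` onto `{0,…,n}`. -/
def initialSeg (n : ℕ) : (⦋n⦌ : SimplexCategory) ⟶ ⦋n + 1⦌ :=
  SimplexCategory.mkHom ⟨fun i => i.castSucc, fun a b h => by simpa using h⟩

/-- The inert inclusion `⦋1⦌ ↪ [n+1]` onto the last edge `{n, n+1}`. -/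
def lastEdge (n : ℕ) : (⦋1⦌ : SimplexCategory) ⟶ ⦋n + 1⦌ :=
  SimplexCategory.mkHom ⟨fun j => ⟨n + j.1, by have := j.isLt; omega⟩,
    fun a b h => by simp only [Fin.mk_le_mk]; have : a.1 ≤ b.1 := h; omega⟩

/-- The inclusion of the last vertex `⦋0⦌ → ⦋n⦌`. -/
def lastVertex (n : ℕ) : (⦋0⦌ : SimplexCategory) ⟶ ⦋n⦌ :=
  SimplexCategory.mkHom ⟨fun _ => Fin.last n, fun _ _ _ => le_refl _⟩

/-- The inclusion of the first vertex `⦋0⦌ → ⦋n⦌`. -/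
def firstVertex (n : ℕ) : (⦋0⦌ : SimplexCategory) ⟶ ⦋n⦌ :=
  SimplexCategory.mkHom ⟨fun _ => 0, fun _ _ _ => le_refl _⟩

/-- The inert inclusion `ρ_i : ⦋1⦌ ↪ ⦋n⦌` onto `{i, i+1}` (for `i : Fin n`). -/
def inert (n : ℕ) (i : Fin n) : (⦋1⦌ : SimplexCategory) ⟶ ⦋n⦌ :=
  SimplexCategory.mkHom ⟨fun j => ⟨i.1 + j.1, by have := i.isLt; have := j.isLt; omega⟩,
    fun a b h => by simp only [Fin.mk_le_mk]; have : a.1 ≤ b.1 := h; omega⟩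

variable {n m : ℕ}

/-- A map in the simplex category is active if it preserves the endpoints. -/
def IsActiveHom (φ : (⦋n⦌ : SimplexCategory) ⟶ ⦋m⦌) : Prop :=
  φ.toOrderHom 0 = 0 ∧ φ.toOrderHom (Fin.last n) = Fin.last m

/-- The length `φ(i) − φ(i−1)` of the `i`-th block of `φ`. -/
def blockLen (φ : (⦋n⦌ : SimplexCategory) ⟶ ⦋m⦌) (i : Fin n) : ℕ :=
  (φ.toOrderHom i.succ).1 - (φ.toOrderHom i.castSucc).1

/-- The inclusion `[φ(i) − φ(i−1)] → ⦋m⦌` onto the interval `{φ(i−1), …, φ(i)}`. -/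
def restr (φ : (⦋n⦌ : SimplexCategory) ⟶ ⦋m⦌) (i : Fin n) :
    (⦋blockLen φ i⦌ : SimplexCategory) ⟶ ⦋m⦌ :=
  SimplexCategory.mkHom ⟨fun j => ⟨(φ.toOrderHom i.castSucc).1 + j.1, by
      have h1 : (φ.toOrderHom i.castSucc).1 ≤ (φ.toOrderHom i.succ).1 :=
        φ.toOrderHom.monotone (Fin.castSucc_le_succ i)
      have h2 := (φ.toOrderHom i.succ).isLt
      have h3 := j.isLt
      simp only [blockLen] at h3
      simp only [SimplexCategory.len_mk] at *
      omega⟩,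
    fun a b h => by simp only [Fin.mk_le_mk]; have : a.1 ≤ b.1 := h; omega⟩

/-- The active map `⦋1⦌ → [φ(i) − φ(i−1)]` hitting the endpoints. -/
def activeEdge (φ : (⦋n⦌ : SimplexCategory) ⟶ ⦋m⦌) (i : Fin n) :
    (⦋1⦌ : SimplexCategory) ⟶ ⦋blockLen φ i⦌ :=
  SimplexCategory.mkHom ⟨fun j => ⟨j.1 * blockLen φ i, by
      have hj := j.isLt
      have : j.1 * blockLen φ i ≤ 1 * blockLen φ i := Nat.mul_le_mul_right _ (by omega)
      omega⟩,
    fun a b h => by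
      simp only [Fin.mk_le_mk]
      exact Nat.mul_le_mul_right _ h⟩

variable {C : Type u} [Category.{v} C]

/-- The Segal condition for a simplicial object: for every `n` the square expressing
`X_{n+1} ≅ X_n ×_{X_0} X_1` (restriction to `{0,…,n}` and to the last edge) is a
pullback.  By induction this is equivalent to the usual iterated fiber product
condition `X_n ≅ X_1 ×_{X_0} ⋯ ×_{X_0} X_1`. -/
def SegalCond (X : CategoryTheory.SimplicialObject C) : Prop :=
  ∀ n : ℕ, IsPullback
    (X.map (initialSeg n).op) (X.map (lastEdge (n := n)).op)
    (X.map (lastVertex n).op) (X.map (firstVertex 1).op)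

/-- The 2-Segal (decomposition) condition: for every active `φ : ⦋n⦌ → ⦋m⦌` the square
expressing `X_m ≅ X_n ×_{∏ᵢ X_1} ∏ᵢ X_{φ(i)−φ(i−1)}` is a pullback. -/
def TwoSegalCond [HasFiniteLimits C] (X : CategoryTheory.SimplicialObject C) : Prop :=
  ∀ (n m : ℕ) (φ : (⦋n⦌ : SimplexCategory) ⟶ ⦋m⦌), IsActiveHom φ →
    IsPullback
      (X.map φ.op)
      (Pi.lift fun i : Fin n => X.map (restr φ i).op)
      (Pi.lift fun i : Fin n => X.map (inert n i).op)
      (Limits.Pi.map fun i : Fin n => X.map (activeEdge φ i).op)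

end SegalHelpers

/-!
The Segal condition in degrees `2` and `3` identifies `X₂` with `X₁ ×_{X₀} X₁` and `X₃` with
`X₂ ×_{X₀} X₁`. Pasting these pullback squares exhibits `X₃` as `X₂ ×_{X₁} X₂`, glued along the
edge `{0,2}` as well as along the edge `{1,3}`; these are exactly the pullbacks computing the two
bracketings of the triple product, so both are the span `X₁³ ⟵ X₃ ⟶ X₁` of the three consecutive
edges and the long edge of a `3`-simplex. Likewise the degeneracies `σ₀, σ₁ : X₁ ⟶ X₂` exhibit `X₁`
as the pullbacks `X₀ ×_{X₁} X₂` computing the composites with the unit span.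
-/

section Spans

lemma SpanEquiv.symm {x y : C} {s t : SpanD x y} (h : SpanEquiv s t) : SpanEquiv t s := by
  obtain ⟨e, hl, hr⟩ := h
  exact ⟨e.symm, by simp [← hl], by simp [← hr]⟩

lemma SpanEquiv.trans {x y : C} {s t w : SpanD x y} (h : SpanEquiv s t) (h' : SpanEquiv t w) :
    SpanEquiv s w := by
  obtain ⟨e, hl, hr⟩ := h
  obtain ⟨e', hl', hr'⟩ := h'
  exact ⟨e ≪≫ e', by simp [hl', hl], by simp [hr', hr]⟩

lemma spanEquiv_isoSpan {x y : C} (e : x ≅ y) : SpanEquiv ⟨y, e.inv, 𝟙 y⟩ (isoSpan e) :=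
  ⟨e.symm, by simp [isoSpan], by simp [isoSpan]⟩

variable [HasPullbacks C]

lemma spanEquiv_compSpan_of_isPullback {x y z : C} {s : SpanD x y} {t : SpanD y z} {P : C}
    {p : P ⟶ s.mid} {q : P ⟶ t.mid} (h : IsPullback p q s.r t.l) {l : P ⟶ x} {r : P ⟶ z}
    (hl : p ≫ s.l = l) (hr : q ≫ t.r = r) : SpanEquiv (compSpan s t) ⟨P, l, r⟩ :=
  ⟨h.isoPullback.symm, by simp [compSpan, ← hl], by simp [compSpan, ← hr]⟩

lemma spanEquiv_compSpan_isoSpan {x y z : C} (e : x ≅ y) {t : SpanD y z} {s : SpanD x z}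
    (h : SpanEquiv t ⟨s.mid, s.l ≫ e.hom, s.r⟩) : SpanEquiv (compSpan (isoSpan e) t) s := by
  obtain ⟨φ, hl, hr⟩ := h
  have sq : IsPullback s.l φ.inv e.hom t.l :=
    IsPullback.of_vert_isIso ⟨by simp [← hl]⟩
  exact spanEquiv_compSpan_of_isPullback (s := isoSpan e) sq (by simp [isoSpan])
    (by simp [← hr])

end Spans

section Products

variable [HasBinaryProducts C]

lemma CategoryTheory.IsPullback.of_prod_snd_with_id {A B : C} (f : A ⟶ B) (X : C) :
    IsPullback prod.snd (prod.map (𝟙 X) f) f prod.snd :=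
  (IsPullback.of_prod_fst_with_id f X).of_iso (prod.braiding A X) (Iso.refl A)
    (prod.braiding B X) (Iso.refl B) (by simp [prod.lift_snd])
    (by ext <;> simp [prod.lift_fst, prod.lift_snd]) (by simp) (by simp [prod.lift_snd])

variable {P A B Z W : C} {p : P ⟶ A} {q : P ⟶ B} {f : A ⟶ Z} {g : B ⟶ Z}

lemma CategoryTheory.IsPullback.prod_lift_map_id (hpb : IsPullback p q f g) (h : B ⟶ W) :
    IsPullback (prod.lift p (q ≫ h)) q (prod.map f (𝟙 W)) (prod.lift g h) := by
  refine IsPullback.of_right ?_ (by ext <;> simp [hpb.w])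
    (IsPullback.of_prod_fst_with_id f W)
  rw [prod.lift_fst, prod.lift_fst]
  exact hpb

lemma CategoryTheory.IsPullback.prod_lift_id_map (hpb : IsPullback p q f g) (h : B ⟶ W) :
    IsPullback (prod.lift (q ≫ h) p) q (prod.map (𝟙 W) f) (prod.lift h g) := by
  refine IsPullback.of_right ?_ (by ext <;> simp [hpb.w])
    (IsPullback.of_prod_snd_with_id f W)
  rw [prod.lift_snd, prod.lift_snd]
  exact hpb

end Products

namespace SegalHelpers.SegalCond

section Squares

variable {X : SimplicialObject C} (hX : SegalCond X)
include hX

lemma isPullback_two : IsPullback (X.δ (2 : Fin 3)) (X.δ 0) (X.δ 0) (X.δ 1) := by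
  have h := hX 1
  rwa [show initialSeg 1 = SimplexCategory.δ 2 by decide,
    show lastEdge 1 = SimplexCategory.δ 0 by decide,
    show lastVertex 1 = SimplexCategory.δ 0 by decide,
    show firstVertex 1 = SimplexCategory.δ 1 by decide] at h

lemma isPullback_three :
    IsPullback (X.δ (3 : Fin 4)) (X.δ 0 ≫ X.δ 0) (X.δ 0 ≫ X.δ 0) (X.δ 1) := by
  have h := hX 2
  rwa [show initialSeg 2 = SimplexCategory.δ 3 by decide,
    show lastEdge 2 = SimplexCategory.δ 0 ≫ SimplexCategory.δ 0 by decide,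
    show lastVertex 2 = SimplexCategory.δ 0 ≫ SimplexCategory.δ 0 by decide,
    show firstVertex 1 = SimplexCategory.δ 1 by decide, op_comp, X.map_comp, op_comp,
    X.map_comp] at h

/-- `X₃ ≅ X₂ ×_{X₁} X₂`, glued along the edge `{1,2}`. -/
lemma isPullback_δ₀_δ₃ : IsPullback (X.δ (0 : Fin 4)) (X.δ 3) (X.δ 2) (X.δ 0) :=
  (hX.isPullback_three.flip).of_right (X.δ_comp_δ (i := 0) (j := 2) (by decide)).symm
    hX.isPullback_two.flip

/-- `X₃ ≅ X₂ ×_{X₁} X₂`, glued along the edge `{0,2}`. -/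
lemma isPullback_δ₃_δ₁ : IsPullback (X.δ (3 : Fin 4)) (X.δ 1) (X.δ 1) (X.δ 2) := by
  have outer := hX.isPullback_three.flip
  have e₃ : X.δ (0 : Fin 4) ≫ X.δ (0 : Fin 3) = X.δ 1 ≫ X.δ 0 := X.δ_comp_δ_self (i := 0)
  have e₂ : X.δ (0 : Fin 3) ≫ X.δ (0 : Fin 2) = X.δ 1 ≫ X.δ 0 := X.δ_comp_δ_self (i := 0)
  rw [e₃, e₂] at outer
  exact (outer.of_right (X.δ_comp_δ (i := 1) (j := 2) (by decide)).symm
    hX.isPullback_two.flip).flip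

/-- `X₃ ≅ X₂ ×_{X₁} X₂`, glued along the edge `{1,3}`. -/
lemma isPullback_δ₀_δ₂ : IsPullback (X.δ (0 : Fin 4)) (X.δ 2) (X.δ 1) (X.δ 0) := by
  have outer := hX.isPullback_δ₀_δ₃.paste_vert hX.isPullback_two.flip
  have e₃ : X.δ (3 : Fin 4) ≫ X.δ (2 : Fin 3) = X.δ 2 ≫ X.δ 2 :=
    (X.δ_comp_δ_self (i := 2)).symm
  have e₂ : X.δ (2 : Fin 3) ≫ X.δ (1 : Fin 2) = X.δ 1 ≫ X.δ 1 :=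
    (X.δ_comp_δ_self (i := 1)).symm
  rw [e₃, e₂] at outer
  exact outer.of_bot (X.δ_comp_δ (i := 0) (j := 1) (by decide)).symm hX.isPullback_two.flip

lemma isPullback_σ₀ : IsPullback (X.σ (0 : Fin 2)) (X.δ 1) (X.δ 2) (X.σ 0) := by
  have outer : IsPullback (X.σ (0 : Fin 2) ≫ X.δ 0) (X.δ 1) (X.δ 1) (X.σ 0 ≫ X.δ 0) := by
    have e₁ : X.σ (0 : Fin 2) ≫ X.δ (0 : Fin 3) = 𝟙 _ := X.δ_comp_σ_self (i := 0)
    have e₀ : X.σ (0 : Fin 1) ≫ X.δ (0 : Fin 2) = 𝟙 _ := X.δ_comp_σ_self (i := 0)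
    rw [e₁, e₀]
    exact IsPullback.id_horiz _
  exact outer.of_right (X.δ_comp_σ_of_gt (i := 1) (j := 0) (by decide)) hX.isPullback_two.flip

lemma isPullback_σ₁ : IsPullback (X.σ (1 : Fin 2)) (X.δ 0) (X.δ 0) (X.σ 0) := by
  have outer : IsPullback (X.σ (1 : Fin 2) ≫ X.δ 2) (X.δ 0) (X.δ 0) (X.σ 0 ≫ X.δ 1) := by
    have e₁ : X.σ (1 : Fin 2) ≫ X.δ (2 : Fin 3) = 𝟙 _ := X.δ_comp_σ_succ (i := 1)
    have e₀ : X.σ (0 : Fin 1) ≫ X.δ (1 : Fin 2) = 𝟙 _ := X.δ_comp_σ_succ (i := 0)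
    rw [e₁, e₀]
    exact IsPullback.id_horiz _
  exact outer.of_right (X.δ_comp_σ_of_le (i := 0) (j := 0) (by decide)) hX.isPullback_two

end Squares

variable [HasFiniteLimits C]

/-- The legs of this span are the edges `{0,1}`, `{1,2}`, `{2,3}` and the long edge `{0,3}` of a
`3`-simplex. -/
noncomputable def tripleMulSpan (X : SimplicialObject C) :
    SpanD ((X _⦋1⦌ ⨯ X _⦋1⦌) ⨯ X _⦋1⦌) (X _⦋1⦌) :=
  ⟨X _⦋3⦌, prod.lift (prod.lift (X.δ 3 ≫ X.δ 2) (X.δ 3 ≫ X.δ 0)) (X.δ 1 ≫ X.δ 0), X.δ 1 ≫ X.δ 1⟩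

variable {X : SimplicialObject C} (hX : SegalCond X)
include hX

lemma spanEquiv_compSpan_prodSpan_mulSpan_idSpan :
    SpanEquiv (compSpan (prodSpan (mulSpan X) (idSpan _)) (mulSpan X)) (tripleMulSpan X) :=
  spanEquiv_compSpan_of_isPullback (hX.isPullback_δ₃_δ₁.prod_lift_map_id (X.δ 0))
    (by ext <;> simp [mulSpan, prodSpan, idSpan, prod.lift_fst, prod.lift_snd]) rfl

lemma spanEquiv_compSpan_prodSpan_idSpan_mulSpan :
    SpanEquiv (compSpan (prodSpan (idSpan _) (mulSpan X)) (mulSpan X))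
      ⟨X _⦋3⦌, (tripleMulSpan X).l ≫ (Limits.prod.associator _ _ _).hom, (tripleMulSpan X).r⟩ := by
  have e₀₁ : X.δ (2 : Fin 4) ≫ X.δ (2 : Fin 3) = X.δ 3 ≫ X.δ 2 := X.δ_comp_δ_self (i := 2)
  have e₁₂ : X.δ (0 : Fin 4) ≫ X.δ (2 : Fin 3) = X.δ 3 ≫ X.δ 0 :=
    (X.δ_comp_δ (i := 0) (j := 2) (by decide)).symm
  have e₂₃ : X.δ (0 : Fin 4) ≫ X.δ (0 : Fin 3) = X.δ 1 ≫ X.δ 0 := X.δ_comp_δ_self (i := 0)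
  have e₀₃ : X.δ (2 : Fin 4) ≫ X.δ (1 : Fin 3) = X.δ 1 ≫ X.δ 1 :=
    (X.δ_comp_δ_self (i := 1)).symm
  exact spanEquiv_compSpan_of_isPullback (hX.isPullback_δ₀_δ₂.prod_lift_id_map (X.δ 2))
    (by ext <;> simp [mulSpan, prodSpan, tripleMulSpan, idSpan, prod.lift_fst, prod.lift_snd,
      prod.lift_fst_assoc, e₀₁, e₁₂, e₂₃])
    e₀₃

lemma spanEquiv_compSpan_prodSpan_unitSpan_idSpan :
    SpanEquiv (compSpan (prodSpan (unitSpan X) (idSpan _)) (mulSpan X))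
      (isoSpan (prod.leftUnitor _)) := by
  have e₁ : X.σ (0 : Fin 2) ≫ X.δ (0 : Fin 3) = 𝟙 _ := X.δ_comp_σ_self (i := 0)
  have e₂ : X.σ (0 : Fin 2) ≫ X.δ (1 : Fin 3) = 𝟙 _ := X.δ_comp_σ_succ (i := 0)
  refine (spanEquiv_compSpan_of_isPullback (hX.isPullback_σ₀.flip.prod_lift_map_id (X.δ 0))
    ?_ e₂).trans (spanEquiv_isoSpan _)
  ext
  simp [prodSpan, unitSpan, idSpan, prod.lift_snd, e₁]

lemma spanEquiv_compSpan_prodSpan_idSpan_unitSpan :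
    SpanEquiv (compSpan (prodSpan (idSpan _) (unitSpan X)) (mulSpan X))
      (isoSpan (prod.rightUnitor _)) := by
  have e₁ : X.σ (1 : Fin 2) ≫ X.δ (2 : Fin 3) = 𝟙 _ := X.δ_comp_σ_succ (i := 1)
  have e₂ : X.σ (1 : Fin 2) ≫ X.δ (1 : Fin 3) = 𝟙 _ := X.δ_comp_σ_self (i := 1)
  refine (spanEquiv_compSpan_of_isPullback (hX.isPullback_σ₁.flip.prod_lift_id_map (X.δ 2))
    ?_ e₂).trans (spanEquiv_isoSpan _)
  ext
  simp [prodSpan, unitSpan, idSpan, prod.lift_fst, e₁]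

end SegalHelpers.SegalCond

open SegalHelpers in
/-- If `X` is a category object (Segal object) in a category `C` with finite limits, then
`X_1` with the multiplication span `X_1 ⨯ X_1 ⟵ X_2 ⟶ X_1` and the unit span
`* ⟵ X_0 ⟶ X_1` is a monoid in the monoidal category of spans `Span(C)`. -/
theorem segal_object_monoid_in_span (C : Type u) [Category.{v} C] [HasFiniteLimits C]
    (X : CategoryTheory.SimplicialObject C) (hX : SegalCond X) :
    IsMonoidInSpan (X _⦋1⦌) (mulSpan X) (unitSpan X) :=
  ⟨hX.spanEquiv_compSpan_prodSpan_mulSpan_idSpan.trans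
      (spanEquiv_compSpan_isoSpan _ hX.spanEquiv_compSpan_prodSpan_idSpan_mulSpan).symm,
    hX.spanEquiv_compSpan_prodSpan_unitSpan_idSpan,
    hX.spanEquiv_compSpan_prodSpan_idSpan_unitSpan⟩
end
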